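/- Define f(g,k) = ∑_{i=0}^{g} (-1)^i * C(g,i) * (g+1-i)^k. Then for all g, k ≥ 0 the recursion f(g+1, k+1) = (g+1) * ∑_{j=0}^{k} C(k+1, j) * f(g, k-j) holds. -/

import Mathlib

/-!
Both sides equal `∑_{i ≤ g} (-1)^i C(g+1,i) ((g+2-i)^(k+1) - 1)`. On the right, absorb the factor
`g + 1` through `(g+1) C(g,i) = C(g+1,i) (g+1-i)`; with `x = g+1-i` the inner binomial sum becomes
`x ∑_j C(k+1,j) x^(k-j) = (1+x)^(k+1) - 1`. On the left, subtract the vanishing alternating sum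
`∑_i (-1)^i C(g+1,i)`, which kills the term `i = g + 1`.
-/

open Finset

/-- `f(g,k) = ∑_{i=0}^{g} (-1)^i * C(g,i) * (g+1-i)^k`. -/
def altSum (g k : ℕ) : ℤ :=
  ∑ i ∈ Finset.range (g + 1), (-1 : ℤ) ^ i * (g.choose i) * ((g : ℤ) + 1 - i) ^ k

lemma mul_sum_choose_mul_pow {R : Type*} [CommRing R] (x : R) (k : ℕ) :
    x * ∑ j ∈ range (k + 1), ((k + 1).choose j : R) * x ^ (k - j) = (1 + x) ^ (k + 1) - 1 := by
  rw [add_pow, sum_range_succ _ (k + 1), mul_sum]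
  simp only [one_pow, one_mul, Nat.sub_self, pow_zero, Nat.choose_self, Nat.cast_one,
    add_sub_cancel_right]
  refine sum_congr rfl fun j hj => ?_
  rw [Nat.sub_add_comm (Nat.le_of_lt_succ (mem_range.mp hj)), pow_succ]
  ring

lemma Int.succ_mul_choose_eq_choose_mul_sub (n i : ℕ) (hi : i ≤ n + 1) :
    ((n : ℤ) + 1) * n.choose i = (n + 1).choose i * ((n : ℤ) + 1 - i) := by
  have h := congrArg (Nat.cast (R := ℤ)) (Nat.choose_mul_succ_eq n i)
  push_cast [Nat.cast_sub hi] at h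
  linarith

lemma altSum_succ_succ (g k : ℕ) :
    altSum (g + 1) (k + 1) =
      ∑ i ∈ range (g + 1),
        (-1) ^ i * ((g + 1).choose i : ℤ) * ((1 + ((g : ℤ) + 1 - i)) ^ (k + 1) - 1) := by
  have hvanish : ∑ i ∈ range (g + 2), (-1) ^ i * ((g + 1).choose i : ℤ) = 0 :=
    Int.alternating_sum_range_choose_of_ne g.succ_ne_zero
  rw [altSum, ← sub_zero (∑ i ∈ _, _), ← hvanish, ← sum_sub_distrib, sum_range_succ]
  push_cast
  rw [add_sub_cancel_left, one_pow, mul_one, sub_self, add_zero]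
  exact sum_congr rfl fun i _ => by ring

lemma mul_sum_choose_mul_altSum (g k : ℕ) :
    ((g : ℤ) + 1) * ∑ j ∈ range (k + 1), ((k + 1).choose j) * altSum g (k - j) =
      ∑ i ∈ range (g + 1),
        (-1) ^ i * ((g + 1).choose i : ℤ) * ((1 + ((g : ℤ) + 1 - i)) ^ (k + 1) - 1) := by
  simp only [altSum, mul_sum]
  rw [sum_comm]
  refine sum_congr rfl fun i hi => ?_
  have hchoose := Int.succ_mul_choose_eq_choose_mul_sub g i (by have := mem_range.mp hi; omega)
  rw [← mul_sum_choose_mul_pow, mul_sum, mul_sum]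
  refine sum_congr rfl fun j _ => ?_
  linear_combination (-1) ^ i * ((k + 1).choose j : ℤ) * ((g : ℤ) + 1 - i) ^ (k - j) * hchoose

/-- The recursion `f(g+1, k+1) = (g+1) * ∑_{j=0}^{k} C(k+1, j) * f(g, k-j)`. -/
theorem altSum_recursion (g k : ℕ) :
    altSum (g + 1) (k + 1) =
      ((g : ℤ) + 1) * ∑ j ∈ Finset.range (k + 1), ((k + 1).choose j) * altSum g (k - j) := by
  rw [altSum_succ_succ, mul_sum_choose_mul_altSum]
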